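/- arXiv:math/0206006 — 5 statements merged into one kernel-verified Lean document; each statement's English description precedes it below -/
import Mathlib

section
/- Let 0 ≤ ρ < 1 and φ ∈ ℝ, and let μ = (ρ cos φ, ρ sin φ) be a point in the open unit disk of ℝ². For any real numbers a ≤ b with b − a ≤ 2π, the two-dimensional Lebesgue measure of the set of points u in the closed unit disk for which there exist t ≥ 1 and θ ∈ [a, b] with μ + t•(u − μ) = (cos θ, sin θ), equals ∫_a^b (1 − ρ cos(θ − φ))/2 dθ. (Equivalently: if U is uniformly distributed on the unit disk and X is the point where the ray from μ through U meets the unit circle, then the angle Θ of X has probability density (1 − ρ cos(θ − φ))/(2π).) -/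
/-!
Parametrize the set by `(θ, s) ↦ μ + s • ((cos θ, sin θ) - μ)` on `[a, b] × (0, 1]`. Since `μ` is
an interior point, every ray from `μ` leaves the disk exactly once, so this map is injective away
from the null edge `θ = a` (which matters when `b - a = 2π`). Its Jacobian determinant has absolute
value `s (1 - ρ cos (θ - φ))`, and the change of variables formula turns the area into
`∫_a^b ∫_0^1 s (1 - ρ cos (θ - φ)) ds dθ`.
-/

open MeasureTheory Real Set

theorem addHaar_image_eq_lintegral_abs_det_fderiv_of_ae_eq {E : Type*} [NormedAddCommGroup E]
    [NormedSpace ℝ E] [FiniteDimensional ℝ E] [MeasurableSpace E] [BorelSpace E]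
    (μ : Measure E) [μ.IsAddHaarMeasure] {f : E → E} {f' : E → E →L[ℝ] E} {s t : Set E}
    (hs : MeasurableSet s) (ht : MeasurableSet t) (hts : t ⊆ s) (hst : s =ᵐ[μ] t)
    (hf' : ∀ x ∈ s, HasFDerivWithinAt f (f' x) s x) (hf : InjOn f t) :
    μ (f '' s) = ∫⁻ x in s, ENNReal.ofReal |(f' x).det| ∂μ := by
  refine le_antisymm (addHaar_image_le_lintegral_abs_det_fderiv μ hs hf') ?_
  calc ∫⁻ x in s, ENNReal.ofReal |(f' x).det| ∂μ
      = ∫⁻ x in t, ENNReal.ofReal |(f' x).det| ∂μ := setLIntegral_congr hst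
    _ = μ (f '' t) := lintegral_abs_det_fderiv_eq_addHaar_image μ ht
        (fun x hx => (hf' x (hts hx)).mono hts) hf
    _ ≤ μ (f '' s) := measure_mono (image_mono hts)

theorem eq_of_cos_eq_of_sin_eq_of_mem_Ioc {a θ ψ : ℝ} (hθ : θ ∈ Ioc a (a + 2 * π))
    (hψ : ψ ∈ Ioc a (a + 2 * π)) (hcos : cos θ = cos ψ) (hsin : sin θ = sin ψ) : θ = ψ := by
  have : Fact (0 < 2 * π) := ⟨two_pi_pos⟩
  exact (AddCircle.coe_eq_coe_iff_of_mem_Ioc hθ hψ).1 (Real.Angle.cos_sin_inj hcos hsin)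

theorem eq_of_smul_sub_eq_smul_sub {c x y : ℝ × ℝ} (hc : c.1 ^ 2 + c.2 ^ 2 < 1)
    (hx : x.1 ^ 2 + x.2 ^ 2 = 1) (hy : y.1 ^ 2 + y.2 ^ 2 = 1) {s t : ℝ} (hs : 0 < s)
    (ht : 0 < t) (h : s • (x - c) = t • (y - c)) : s = t := by
  obtain ⟨h₁, h₂⟩ := Prod.ext_iff.1 h
  simp only [Prod.smul_fst, Prod.smul_snd, Prod.fst_sub, Prod.snd_sub, smul_eq_mul] at h₁ h₂
  -- Expand `s² |x|² = |s • c + t • (y - c)|²` and use `|y|² = 1`.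
  have hfactor : (s - t) * (s * (1 - (c.1 ^ 2 + c.2 ^ 2))
      + t * ((y.1 - c.1) ^ 2 + (y.2 - c.2) ^ 2)) = 0 := by
    linear_combination (-s ^ 2) * hx + s * t * hy
      + (s * (x.1 - c.1) + t * (y.1 - c.1) + 2 * s * c.1) * h₁
      + (s * (x.2 - c.2) + t * (y.2 - c.2) + 2 * s * c.2) * h₂
  have hpos : 0 < s * (1 - (c.1 ^ 2 + c.2 ^ 2)) + t * ((y.1 - c.1) ^ 2 + (y.2 - c.2) ^ 2) :=
    add_pos_of_pos_of_nonneg (mul_pos hs (sub_pos.2 hc)) (by positivity)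
  exact sub_eq_zero.1 ((mul_eq_zero.1 hfactor).resolve_right hpos.ne')

theorem one_sub_mul_cos_sub_mul_sin_nonneg {c : ℝ × ℝ} (hc : c.1 ^ 2 + c.2 ^ 2 ≤ 1) (θ : ℝ) :
    0 ≤ 1 - c.1 * cos θ - c.2 * sin θ := by
  nlinarith [sq_nonneg (c.1 - cos θ), sq_nonneg (c.2 - sin θ), sin_sq_add_cos_sq θ]

theorem setIntegral_Icc_prod_Ioc_mul_snd (g : ℝ → ℝ) {a b : ℝ} (hab : a ≤ b) :
    ∫ p in Icc a b ×ˢ Ioc (0 : ℝ) 1, g p.1 * p.2 = (∫ θ in a..b, g θ) / 2 := by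
  rw [Measure.volume_eq_prod, setIntegral_prod_mul g (fun s : ℝ => s),
    integral_Icc_eq_integral_Ioc, ← intervalIntegral.integral_of_le hab,
    ← intervalIntegral.integral_of_le zero_le_one, integral_id]
  ring

namespace ShadowAngle

noncomputable def rayCoord (c p : ℝ × ℝ) : ℝ × ℝ := c + p.2 • ((cos p.1, sin p.1) - c)

noncomputable def rayCoordDeriv (c p : ℝ × ℝ) : ℝ × ℝ →L[ℝ] ℝ × ℝ :=
  LinearMap.toContinuousLinearMap <|
    Matrix.toLin (Module.Basis.finTwoProd ℝ) (Module.Basis.finTwoProd ℝ)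
      !![-p.2 * sin p.1, cos p.1 - c.1; p.2 * cos p.1, sin p.1 - c.2]

theorem hasFDerivAt_rayCoord (c p : ℝ × ℝ) :
    HasFDerivAt (rayCoord c) (rayCoordDeriv c p) p := by
  have hcircle :=
    ((hasDerivAt_cos p.1).comp_hasFDerivAt p (hasFDerivAt_fst (𝕜 := ℝ) (p := p))).prodMk
      ((hasDerivAt_sin p.1).comp_hasFDerivAt p (hasFDerivAt_fst (𝕜 := ℝ) (p := p)))
  refine ((hasFDerivAt_const c p).add
    (hasFDerivAt_snd.smul (hcircle.sub_const c))).congr_fderiv ?_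
  rw [rayCoordDeriv, Matrix.toLin_finTwoProd_toContinuousLinearMap]
  ext <;> simp

theorem det_rayCoordDeriv (c p : ℝ × ℝ) :
    (rayCoordDeriv c p).det = -p.2 * (1 - c.1 * cos p.1 - c.2 * sin p.1) := by
  simp only [rayCoordDeriv, LinearMap.det_toContinuousLinearMap, LinearMap.det_toLin,
    Matrix.det_fin_two_of]
  linear_combination -p.2 * sin_sq_add_cos_sq p.1

theorem injOn_rayCoord {c : ℝ × ℝ} (hc : c.1 ^ 2 + c.2 ^ 2 < 1) {a b : ℝ}
    (hba : b - a ≤ 2 * π) : InjOn (rayCoord c) (Ioc a b ×ˢ Ioi 0) := by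
  rintro ⟨θ, s⟩ ⟨hθ, hs⟩ ⟨ψ, t⟩ ⟨hψ, ht⟩ h
  have hray : s • ((cos θ, sin θ) - c) = t • ((cos ψ, sin ψ) - c) := add_left_cancel h
  have hst : s = t := eq_of_smul_sub_eq_smul_sub hc (sin_sq_add_cos_sq θ ▸ by ring)
    (sin_sq_add_cos_sq ψ ▸ by ring) hs ht hray
  subst hst
  obtain ⟨hcos, hsin⟩ := Prod.ext_iff.1 (sub_left_injective (smul_right_injective _ hs.ne' hray))
  have hIoc : Ioc a b ⊆ Ioc a (a + 2 * π) := Ioc_subset_Ioc_right (by linarith)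
  exact Prod.ext (eq_of_cos_eq_of_sin_eq_of_mem_Ioc (hIoc hθ) (hIoc hψ) hcos hsin) rfl

theorem shadow_eq_image_rayCoord {c : ℝ × ℝ} (hc : c.1 ^ 2 + c.2 ^ 2 ≤ 1) (I : Set ℝ) :
    {u : ℝ × ℝ | u.1 ^ 2 + u.2 ^ 2 ≤ 1 ∧ ∃ t ≥ (1 : ℝ), ∃ θ ∈ I, c + t • (u - c) = (cos θ, sin θ)}
      = rayCoord c '' (I ×ˢ Ioc 0 1) := by
  ext u
  constructor
  · rintro ⟨-, t, ht, θ, hθ, h⟩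
    refine ⟨(θ, t⁻¹), ⟨hθ, by positivity, inv_le_one_of_one_le₀ ht⟩, ?_⟩
    rw [rayCoord, ← h, add_sub_cancel_left, smul_smul, inv_mul_cancel₀ (by positivity), one_smul,
      add_sub_cancel]
  · rintro ⟨⟨θ, s⟩, ⟨hθ, hs₀, hs₁⟩, rfl⟩
    refine ⟨?_, s⁻¹, one_le_inv_iff₀.2 ⟨hs₀, hs₁⟩, θ, hθ, ?_⟩
    · simp only [rayCoord, Prod.fst_add, Prod.snd_add, Prod.smul_fst, Prod.smul_snd,
        Prod.fst_sub, Prod.snd_sub, smul_eq_mul]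
      nlinarith [sin_sq_add_cos_sq θ, mul_nonneg (mul_nonneg hs₀.le (sub_nonneg.2 hs₁))
        (add_nonneg (sq_nonneg (c.1 - cos θ)) (sq_nonneg (c.2 - sin θ)))]
    · rw [rayCoord, add_sub_cancel_left, smul_smul, inv_mul_cancel₀ hs₀.ne', one_smul,
        add_sub_cancel]

theorem lintegral_abs_det_rayCoordDeriv {c : ℝ × ℝ} (hc : c.1 ^ 2 + c.2 ^ 2 ≤ 1) {a b : ℝ}
    (hab : a ≤ b) :
    ∫⁻ p in Icc a b ×ˢ Ioc (0 : ℝ) 1, ENNReal.ofReal |(rayCoordDeriv c p).det|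
      = ENNReal.ofReal ((∫ θ in a..b, (1 - c.1 * cos θ - c.2 * sin θ)) / 2) := by
  set g : ℝ → ℝ := fun θ => 1 - c.1 * cos θ - c.2 * sin θ
  have hg : ∀ θ, 0 ≤ g θ := one_sub_mul_cos_sub_mul_sin_nonneg hc
  have hmeas : MeasurableSet (Icc a b ×ˢ Ioc (0 : ℝ) 1) :=
    measurableSet_Icc.prod measurableSet_Ioc
  have hdet : ∀ p ∈ Icc a b ×ˢ Ioc (0 : ℝ) 1, |(rayCoordDeriv c p).det| = g p.1 * p.2 := by
    rintro ⟨θ, s⟩ ⟨-, hs, -⟩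
    rw [det_rayCoordDeriv, neg_mul, abs_neg, abs_of_nonneg (mul_nonneg hs.le (hg θ)), mul_comm]
  have hint : IntegrableOn (fun p : ℝ × ℝ => g p.1 * p.2) (Icc a b ×ˢ Ioc (0 : ℝ) 1) :=
    ((by fun_prop : Continuous fun p : ℝ × ℝ => g p.1 * p.2).continuousOn.integrableOn_compact
      (isCompact_Icc.prod isCompact_Icc)).mono_set (prod_mono subset_rfl Ioc_subset_Icc_self)
  rw [setLIntegral_congr_fun hmeas (fun p hp => by rw [hdet p hp]),
    ← ofReal_integral_eq_lintegral_ofReal hint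
      ((ae_restrict_iff' hmeas).2 (ae_of_all _ fun p hp => mul_nonneg (hg p.1) hp.2.1.le)),
    setIntegral_Icc_prod_Ioc_mul_snd g hab]

end ShadowAngle

open ShadowAngle

/-- The measure of the set of points of the closed unit disk whose shadow
(from a light source at `μ = (ρ cos φ, ρ sin φ)` in the open unit disk)
has angle in `[a, b]` equals `∫_a^b (1 - ρ cos (θ - φ))/2 dθ`. -/
theorem shadow_angle_density (ρ φ : ℝ) (hρ0 : 0 ≤ ρ) (hρ1 : ρ < 1)
    (a b : ℝ) (hab : a ≤ b) (hba : b - a ≤ 2 * π) :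
    (volume {u : ℝ × ℝ | u.1 ^ 2 + u.2 ^ 2 ≤ 1 ∧
      ∃ t ≥ (1 : ℝ), ∃ θ ∈ Set.Icc a b,
        (ρ * Real.cos φ, ρ * Real.sin φ) + t • (u - (ρ * Real.cos φ, ρ * Real.sin φ))
          = (Real.cos θ, Real.sin θ)}).toReal
      = ∫ θ in a..b, (1 - ρ * Real.cos (θ - φ)) / 2 := by
  set c : ℝ × ℝ := (ρ * cos φ, ρ * sin φ)
  have hc : c.1 ^ 2 + c.2 ^ 2 < 1 := by
    have hρ : c.1 ^ 2 + c.2 ^ 2 = ρ ^ 2 := by linear_combination ρ ^ 2 * sin_sq_add_cos_sq φ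
    rw [hρ]
    nlinarith
  have hdensity : ∀ θ, 1 - c.1 * cos θ - c.2 * sin θ = 1 - ρ * cos (θ - φ) := fun θ => by
    simp only [c, cos_sub]
    ring
  have hIcc : Icc a b ×ˢ Ioc (0 : ℝ) 1 =ᵐ[volume] Ioc a b ×ˢ Ioc (0 : ℝ) 1 := by
    rw [Measure.volume_eq_prod]
    exact Measure.set_prod_ae_eq Ioc_ae_eq_Icc.symm .rfl
  rw [shadow_eq_image_rayCoord hc.le,
    addHaar_image_eq_lintegral_abs_det_fderiv_of_ae_eq volume
      (measurableSet_Icc.prod measurableSet_Ioc) (measurableSet_Ioc.prod measurableSet_Ioc)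
      (prod_mono Ioc_subset_Icc_self subset_rfl) hIcc
      (fun p _ => (hasFDerivAt_rayCoord c p).hasFDerivWithinAt)
      ((injOn_rayCoord hc hba).mono (prod_mono subset_rfl Ioc_subset_Ioi_self)),
    lintegral_abs_det_rayCoordDeriv hc.le hab, ENNReal.toReal_ofReal, intervalIntegral.integral_div]
  · simp_rw [hdensity]
  · exact div_nonneg (intervalIntegral.integral_nonneg hab
      fun θ _ => one_sub_mul_cos_sub_mul_sin_nonneg hc.le θ) zero_le_two
end

section
/- Let μ = (1, 0) be on the unit circle. For every θ with 0 ≤ θ ≤ 2π, the two-dimensional Lebesgue measure of the set of points u in the open unit disk for which there exist t ≥ 1 and ψ ∈ [0, θ] with μ + t•(u − μ) = (cos ψ, sin ψ), equals (θ − sin θ)/2. (That is, when the light source is at (1,0), the probability that the shadow angle lies in [0, θ] is (θ − sin θ)/(2π), so the shadow angle has density (1 − cos θ)/(2π).) -/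
open MeasureTheory Real
open Set

/-- Rotation of the plane by angle `α`, as a linear map. -/
noncomputable def rotMap (α : ℝ) : ℝ × ℝ →ₗ[ℝ] ℝ × ℝ where
  toFun p := (Real.cos α * p.1 - Real.sin α * p.2, Real.sin α * p.1 + Real.cos α * p.2)
  map_add' p q := by simp [Prod.ext_iff]; constructor <;> ring
  map_smul' c p := by simp [Prod.ext_iff]; constructor <;> ring

lemma rotMap_det (α : ℝ) : LinearMap.det (rotMap α) = 1 := by
  rw [← LinearMap.det_toMatrix (Module.Basis.finTwoProd ℝ), Matrix.det_fin_two]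
  simp [LinearMap.toMatrix_apply, rotMap, Module.Basis.coe_finTwoProd_repr,
    Module.Basis.finTwoProd_zero, Module.Basis.finTwoProd_one]
  nlinarith [Real.sin_sq_add_cos_sq α]
open MeasureTheory Real Set

lemma key_integral (α : ℝ) (h0 : 0 ≤ α) (hπ : α ≤ π) :
    ∫ x in Real.cos α..1, 2 * Real.sqrt (1 - x ^ 2) = α - Real.sin α * Real.cos α := by
  have hg : Continuous (fun y : ℝ => 2 * Real.sqrt (1 - y ^ 2)) := by
    exact continuous_const.mul (Real.continuous_sqrt.comp (by continuity))
  have hsub : (∫ x in (0:ℝ)..α, (-Real.sin x) • ((fun y : ℝ => 2 * Real.sqrt (1 - y ^ 2)) ∘ Real.cos) x)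
      = ∫ y in (Real.cos 0)..(Real.cos α), 2 * Real.sqrt (1 - y ^ 2) := by
    apply intervalIntegral.integral_comp_smul_deriv
    · intro x _; simpa using (Real.hasDerivAt_cos x)
    · exact (Real.continuous_sin.neg).continuousOn
    · exact hg
  have hL : (∫ x in (0:ℝ)..α, (-Real.sin x) • ((fun y : ℝ => 2 * Real.sqrt (1 - y ^ 2)) ∘ Real.cos) x)
      = ∫ x in (0:ℝ)..α, -(2 * Real.sin x ^ 2) := by
    apply intervalIntegral.integral_congr
    intro x hx
    rw [Set.uIcc_of_le h0] at hx
    have hs : 0 ≤ Real.sin x := Real.sin_nonneg_of_nonneg_of_le_pi hx.1 (hx.2.trans hπ)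
    have h1 : 1 - Real.cos x ^ 2 = Real.sin x ^ 2 := by nlinarith [Real.sin_sq_add_cos_sq x]
    simp only [Function.comp_apply, smul_eq_mul, h1, Real.sqrt_sq hs]
    ring
  have hsin2 : ∫ x in (0:ℝ)..α, Real.sin x ^ 2
      = (Real.sin 0 * Real.cos 0 - Real.sin α * Real.cos α + α - 0) / 2 := integral_sin_sq
  rw [hL] at hsub
  rw [intervalIntegral.integral_neg, intervalIntegral.integral_const_mul, hsin2] at hsub
  simp only [Real.sin_zero, Real.cos_zero] at hsub
  rw [intervalIntegral.integral_symm, ← hsub]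
  ring

lemma area_cap (α : ℝ) (h0 : 0 ≤ α) (hπ : α ≤ π) :
    volume {p : ℝ × ℝ | p.1 ^ 2 + p.2 ^ 2 < 1 ∧ Real.cos α ≤ p.1}
      = ENNReal.ofReal (α - Real.sin α * Real.cos α) := by
  set c := Real.cos α with hc
  have hc1 : c ≤ 1 := Real.cos_le_one α
  set f : ℝ → ℝ := fun x => -Real.sqrt (1 - x ^ 2) with hf
  set g : ℝ → ℝ := fun x => Real.sqrt (1 - x ^ 2) with hgdef
  have hgc : Continuous g := Real.continuous_sqrt.comp (by continuity)
  have hfc : Continuous f := hgc.neg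
  have hseteq : {p : ℝ × ℝ | p.1 ^ 2 + p.2 ^ 2 < 1 ∧ c ≤ p.1}
      = regionBetween f g (Set.Ico c 1) := by
    ext p
    simp only [regionBetween, Set.mem_setOf_eq, Set.mem_Ico, Set.mem_Ioo, hf, hgdef]
    constructor
    · rintro ⟨hlt, hcle⟩
      have hx1 : p.1 < 1 := by nlinarith
      have hb : (0:ℝ) ≤ 1 - p.1 ^ 2 := by nlinarith
      have h1 := Real.sq_sqrt hb
      have h2 := Real.sqrt_nonneg (1 - p.1 ^ 2)
      refine ⟨⟨hcle, hx1⟩, ?_, ?_⟩ <;>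
        nlinarith [sq_nonneg (p.2 + Real.sqrt (1 - p.1 ^ 2)), sq_nonneg (p.2 - Real.sqrt (1 - p.1 ^ 2))]
    · rintro ⟨⟨hcle, hx1⟩, hlo, hhi⟩
      by_cases hb : (0:ℝ) ≤ 1 - p.1 ^ 2
      · have h1 := Real.sq_sqrt hb
        have h2 := Real.sqrt_nonneg (1 - p.1 ^ 2)
        exact ⟨by nlinarith, hcle⟩
      · exfalso
        rw [Real.sqrt_eq_zero_of_nonpos (by linarith)] at hlo hhi
        linarith
  have hInt : IntegrableOn g (Set.Ico c 1) volume := by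
    exact (hgc.integrableOn_Icc).mono_set Set.Ico_subset_Icc_self
  have hIntf : IntegrableOn f (Set.Ico c 1) volume := hInt.neg
  have hle : ∀ x ∈ Set.Ico c 1, f x ≤ g x := by
    intro x _
    have := Real.sqrt_nonneg (1 - x ^ 2)
    simp only [hf, hgdef]; linarith
  rw [hseteq, Measure.volume_eq_prod,
    volume_regionBetween_eq_integral hIntf hInt measurableSet_Ico hle]
  congr 1
  have hgf : (g - f) = fun x => 2 * Real.sqrt (1 - x ^ 2) := by
    funext x; simp [hf, hgdef]; ring
  rw [hgf]
  rw [← key_integral α h0 hπ, intervalIntegral.integral_of_le hc1]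
  exact setIntegral_congr_set Ico_ae_eq_Ioc
open MeasureTheory Real Set

lemma shadow_set_eq (θ : ℝ) (hθ0 : 0 ≤ θ) (hθ2 : θ ≤ 2 * π) :
    {u : ℝ × ℝ | u.1 ^ 2 + u.2 ^ 2 < 1 ∧
      ∃ t ≥ (1 : ℝ), ∃ ψ ∈ Set.Icc 0 θ,
        ((1 : ℝ), (0 : ℝ)) + t • (u - ((1 : ℝ), (0 : ℝ))) = (Real.cos ψ, Real.sin ψ)}
    = {u : ℝ × ℝ | u.1 ^ 2 + u.2 ^ 2 < 1 ∧
        0 ≤ Real.cos (θ / 2) * (u.1 - 1) + Real.sin (θ / 2) * u.2} := by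
  have hα0 : 0 ≤ θ / 2 := by linarith
  have hαπ : θ / 2 ≤ π := by linarith
  ext u
  simp only [Set.mem_setOf_eq]
  constructor
  · rintro ⟨hu, t, ht, ψ, ⟨hψ0, hψθ⟩, heq⟩
    refine ⟨hu, ?_⟩
    rw [Prod.ext_iff] at heq
    simp only [Prod.fst_add, Prod.snd_add, Prod.smul_fst, Prod.smul_snd, Prod.fst_sub,
      Prod.snd_sub, smul_eq_mul] at heq
    obtain ⟨h1, h2⟩ := heq
    -- h1 : 1 + t * (u.1 - 1) = cos ψ, h2 : 0 + t * (u.2 - 0) = sin ψ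
    have ht0 : (0:ℝ) < t := lt_of_lt_of_le one_pos ht
    have hkey : Real.cos (θ / 2) ≤ Real.cos (ψ - θ / 2) := by
      rw [← Real.cos_abs (ψ - θ / 2)]
      apply Real.cos_le_cos_of_nonneg_of_le_pi (abs_nonneg _) hαπ
      rw [abs_le]; constructor <;> linarith
    have hexp : t * (Real.cos (θ / 2) * (u.1 - 1) + Real.sin (θ / 2) * u.2)
        = Real.cos (ψ - θ / 2) - Real.cos (θ / 2) := by
      rw [Real.cos_sub]
      have e1 : t * (u.1 - 1) = Real.cos ψ - 1 := by linarith
      have e2 : t * u.2 = Real.sin ψ := by linarith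
      have e3 : t * (Real.cos (θ / 2) * (u.1 - 1) + Real.sin (θ / 2) * u.2)
          = Real.cos (θ / 2) * (t * (u.1 - 1)) + Real.sin (θ / 2) * (t * u.2) := by ring
      rw [e3, e1, e2]; ring
    nlinarith
  · rintro ⟨hu, h⟩
    refine ⟨hu, ?_⟩
    set x := u.1 with hx
    set y := u.2 with hy
    have hx1 : x < 1 := by nlinarith
    set d : ℝ := (1 - x) ^ 2 + y ^ 2 with hd
    have hd0 : 0 < d := by nlinarith [sq_nonneg y]
    set t : ℝ := 2 * (1 - x) / d with htdef
    have ht0 : 0 < t := div_pos (by linarith) hd0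
    have ht1 : 1 ≤ t := by
      rw [htdef, le_div_iff₀ hd0]
      nlinarith
    set sx : ℝ := 1 + t * (x - 1) with hsx
    set sy : ℝ := t * y with hsy
    have hcirc : sx ^ 2 + sy ^ 2 = 1 := by
      rw [hsx, hsy, htdef]
      field_simp
      ring
    have hsx1 : sx < 1 := by nlinarith
    have hsxm : -1 ≤ sx := by nlinarith [sq_nonneg sy]
    set ψ : ℝ := if 0 ≤ sy then Real.arccos sx else 2 * π - Real.arccos sx with hψdef
    have hcos : Real.cos ψ = sx := by
      rw [hψdef]; split
      · exact Real.cos_arccos hsxm hsx1.le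
      · rw [Real.cos_two_pi_sub]; exact Real.cos_arccos hsxm hsx1.le
    have hsin : Real.sin ψ = sy := by
      have hs : Real.sqrt (1 - sx ^ 2) = |sy| := by
        rw [show 1 - sx ^ 2 = sy ^ 2 by linarith, Real.sqrt_sq_eq_abs]
      rw [hψdef]; split
      · rename_i hge
        rw [Real.sin_arccos, hs, abs_of_nonneg hge]
      · rename_i hlt
        push_neg at hlt
        rw [Real.sin_two_pi_sub, Real.sin_arccos, hs, abs_of_neg hlt]
        ring
    have hψpos : 0 < ψ := by
      rw [hψdef]; split
      · exact Real.arccos_pos.mpr hsx1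
      · have := Real.arccos_le_pi sx
        linarith [Real.pi_pos]
    have hψlt : ψ < 2 * π := by
      rw [hψdef]; split
      · have := Real.arccos_le_pi sx
        linarith [Real.pi_pos]
      · linarith [Real.arccos_pos.mpr hsx1]
    have hkey : Real.cos (θ / 2) ≤ Real.cos (ψ - θ / 2) := by
      have hexp : t * (Real.cos (θ / 2) * (x - 1) + Real.sin (θ / 2) * y)
          = Real.cos (ψ - θ / 2) - Real.cos (θ / 2) := by
        rw [Real.cos_sub, hcos, hsin]
        rw [hsx, hsy]; ring
      nlinarith
    have hψθ : ψ ≤ θ := by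
      by_contra hcon
      push_neg at hcon
      have hαπ' : θ / 2 < π := by linarith
      have hlo : θ / 2 < ψ - θ / 2 := by linarith
      have hhi : ψ - θ / 2 < 2 * π - θ / 2 := by linarith
      have : Real.cos (ψ - θ / 2) < Real.cos (θ / 2) := by
        rcases le_or_gt (ψ - θ / 2) π with hcase | hcase
        · exact Real.cos_lt_cos_of_nonneg_of_le_pi hα0 hcase hlo
        · rw [← Real.cos_two_pi_sub]
          apply Real.cos_lt_cos_of_nonneg_of_le_pi hα0 (by linarith) (by linarith)
      linarith
    refine ⟨t, ht1, ψ, ⟨hψpos.le, hψθ⟩, ?_⟩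
    rw [Prod.ext_iff]
    simp only [Prod.fst_add, Prod.snd_add, Prod.smul_fst, Prod.smul_snd, Prod.fst_sub,
      Prod.snd_sub, smul_eq_mul]
    constructor
    · rw [hcos, hsx]
    · rw [hsin, hsy]; ring

/-- When the light source is at `(1,0)` on the unit circle, the measure of the set of
points of the open unit disk whose shadow has angle in `[0, θ]` equals `(θ - sin θ)/2`. -/
theorem shadow_angle_cdf_boundary_source (θ : ℝ) (hθ0 : 0 ≤ θ) (hθ2 : θ ≤ 2 * π) :
    (volume {u : ℝ × ℝ | u.1 ^ 2 + u.2 ^ 2 < 1 ∧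
      ∃ t ≥ (1 : ℝ), ∃ ψ ∈ Set.Icc 0 θ,
        ((1 : ℝ), (0 : ℝ)) + t • (u - ((1 : ℝ), (0 : ℝ))) = (Real.cos ψ, Real.sin ψ)}).toReal
      = (θ - Real.sin θ) / 2 := by
  set α := θ / 2 with hαdef
  have hα0 : 0 ≤ α := by rw [hαdef]; linarith
  have hαπ : α ≤ π := by rw [hαdef]; linarith
  rw [shadow_set_eq θ hθ0 hθ2]
  have hpre : {u : ℝ × ℝ | u.1 ^ 2 + u.2 ^ 2 < 1 ∧
        0 ≤ Real.cos (θ / 2) * (u.1 - 1) + Real.sin (θ / 2) * u.2}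
      = (rotMap (-α)) ⁻¹' {p : ℝ × ℝ | p.1 ^ 2 + p.2 ^ 2 < 1 ∧ Real.cos α ≤ p.1} := by
    ext p
    simp only [Set.mem_setOf_eq, Set.mem_preimage, rotMap, LinearMap.coe_mk, AddHom.coe_mk,
      Real.cos_neg, Real.sin_neg, ← hαdef]
    constructor
    · rintro ⟨h1, h2⟩
      constructor
      · nlinarith [Real.sin_sq_add_cos_sq α]
      · nlinarith
    · rintro ⟨h1, h2⟩
      constructor
      · nlinarith [Real.sin_sq_add_cos_sq α]
      · nlinarith
  rw [hpre, Measure.addHaar_preimage_linearMap volume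
      (by rw [rotMap_det]; norm_num) _, rotMap_det, area_cap α hα0 hαπ]
  norm_num
  rw [ENNReal.toReal_ofReal]
  · rw [hαdef]
    rw [show Real.sin θ = Real.sin (2 * (θ / 2)) by congr 1; ring, Real.sin_two_mul]
    ring
  · have hs : Real.sin θ ≤ θ := Real.sin_le hθ0
    rw [hαdef, show Real.sin (θ/2) * Real.cos (θ/2) = Real.sin θ / 2 by
      rw [show Real.sin θ = Real.sin (2 * (θ / 2)) by congr 1; ring, Real.sin_two_mul]; ring]
    linarith
end

section
/- Fix real numbers a ≤ b with b − a ≤ 2π. Define f(μ) for μ in the open unit disk of ℝ² as the two-dimensional Lebesgue measure of the set of points u in the closed unit disk for which there exist t ≥ 1 and θ ∈ [a, b] with μ + t•(u − μ) = (cos θ, sin θ). Then f is affine on the open unit disk: for all μ, ν in the open unit disk and all 0 ≤ c ≤ 1, f(c•μ + (1−c)•ν) = c·f(μ) + (1−c)·f(ν). -/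
/-!
Seen from the source `m`, the points of the disk whose shadow lies on the arc `[a, b]` are the
points `m + s • (e^{iθ} - m)` with `s ∈ (0, 1]` and `θ ∈ [a, b]`. Since `m` lies strictly inside
the disk and `b - a ≤ 2π`, this parametrization is injective on the open rectangle; being
smooth, it maps the null boundary of the rectangle to a null set; and its Jacobian is
`s (1 - ⟨m, e^{iθ}⟩) > 0`. The change of variables formula therefore gives the area
`½ ∫_a^b (1 - ⟨m, e^{iθ}⟩) dθ`, which is affine in `m`.
-/

open MeasureTheory Real Set

noncomputable def shadowMeasure (a b : ℝ) (m : ℝ × ℝ) : ℝ :=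
  (volume {u : ℝ × ℝ | u.1 ^ 2 + u.2 ^ 2 ≤ 1 ∧
    ∃ t ≥ (1 : ℝ), ∃ θ ∈ Set.Icc a b,
      m + t • (u - m) = (Real.cos θ, Real.sin θ)}).toReal

theorem convexOn_sq_add_sq : ConvexOn ℝ univ fun u : ℝ × ℝ => u.1 ^ 2 + u.2 ^ 2 :=
  ((even_two.convexOn_pow (𝕜 := ℝ)).comp_linearMap (LinearMap.fst ℝ ℝ ℝ)).add
    ((even_two.convexOn_pow (𝕜 := ℝ)).comp_linearMap (LinearMap.snd ℝ ℝ ℝ))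

theorem convex_unitDisk : Convex ℝ {u : ℝ × ℝ | u.1 ^ 2 + u.2 ^ 2 ≤ 1} := by
  simpa using convexOn_sq_add_sq.convex_le 1

theorem convex_openUnitDisk : Convex ℝ {u : ℝ × ℝ | u.1 ^ 2 + u.2 ^ 2 < 1} := by
  simpa using convexOn_sq_add_sq.convex_lt 1

theorem one_sub_mul_cos_sub_mul_sin_pos {m : ℝ × ℝ} (hm : m.1 ^ 2 + m.2 ^ 2 < 1) (θ : ℝ) :
    0 < 1 - m.1 * cos θ - m.2 * sin θ := by
  nlinarith [sq_nonneg (m.1 * sin θ - m.2 * cos θ), sq_nonneg (m.1 * cos θ + m.2 * sin θ - 1),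
    sin_sq_add_cos_sq θ]

theorem injOn_cos_sin_Ioo {a b : ℝ} (hba : b - a ≤ 2 * π) :
    InjOn (fun θ => ((cos θ, sin θ) : ℝ × ℝ)) (Ioo a b) := by
  intro θ hθ θ' hθ' h
  simp only [Prod.mk.injEq] at h
  refine Circle.exp_injOn_Ico hba (Ioo_subset_Ico_self hθ) (Ioo_subset_Ico_self hθ') ?_
  apply Circle.ext
  simp only [Circle.coe_exp, Complex.exp_mul_I, ← Complex.ofReal_cos, ← Complex.ofReal_sin, h]

theorem eq_one_of_add_smul_sub_mem_unitCircle {m p : ℝ × ℝ} (hm : m.1 ^ 2 + m.2 ^ 2 < 1)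
    (hp : p.1 ^ 2 + p.2 ^ 2 = 1) {t : ℝ} (ht : 0 ≤ t)
    (h : (m + t • (p - m)).1 ^ 2 + (m + t • (p - m)).2 ^ 2 = 1) : t = 1 := by
  simp only [Prod.fst_add, Prod.snd_add, Prod.smul_fst, Prod.smul_snd, Prod.fst_sub,
    Prod.snd_sub, smul_eq_mul] at h
  set q := (p.1 - m.1) ^ 2 + (p.2 - m.2) ^ 2
  have hfactor : (t - 1) * (1 - (m.1 ^ 2 + m.2 ^ 2) + t * q) = 0 := by
    linear_combination h - t * hp
  have hpos : 0 < 1 - (m.1 ^ 2 + m.2 ^ 2) + t * q := by positivity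
  linarith [(mul_eq_zero.1 hfactor).resolve_right hpos.ne']

noncomputable def coneMap (m : ℝ × ℝ) (p : ℝ × ℝ) : ℝ × ℝ :=
  m + p.1 • ((cos p.2, sin p.2) - m)

theorem coneMap_apply (m p : ℝ × ℝ) :
    coneMap m p = (m.1 + p.1 * (cos p.2 - m.1), m.2 + p.1 * (sin p.2 - m.2)) := rfl

noncomputable def coneMapDeriv (m p : ℝ × ℝ) : ℝ × ℝ →L[ℝ] ℝ × ℝ :=
  LinearMap.toContinuousLinearMap
    (Matrix.toLin (Module.Basis.finTwoProd ℝ) (Module.Basis.finTwoProd ℝ)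
      !![cos p.2 - m.1, -p.1 * sin p.2; sin p.2 - m.2, p.1 * cos p.2])

theorem hasFDerivAt_coneMap (m p : ℝ × ℝ) : HasFDerivAt (coneMap m) (coneMapDeriv m p) p := by
  rw [funext (coneMap_apply m), coneMapDeriv, Matrix.toLin_finTwoProd_toContinuousLinearMap]
  have hcos := (hasDerivAt_cos p.2).comp_hasFDerivAt p (hasFDerivAt_snd (𝕜 := ℝ) (p := p))
  have hsin := (hasDerivAt_sin p.2).comp_hasFDerivAt p (hasFDerivAt_snd (𝕜 := ℝ) (p := p))
  refine HasFDerivAt.prodMk ?_ ?_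
  · refine ((hasFDerivAt_fst.mul (hcos.sub_const m.1)).const_add m.1).congr_fderiv ?_
    ext <;> simp
  · refine ((hasFDerivAt_fst.mul (hsin.sub_const m.2)).const_add m.2).congr_fderiv ?_
    ext <;> simp

theorem det_coneMapDeriv (m p : ℝ × ℝ) :
    (coneMapDeriv m p).det = p.1 * (1 - m.1 * cos p.2 - m.2 * sin p.2) := by
  simp only [coneMapDeriv, ContinuousLinearMap.det, LinearMap.coe_toContinuousLinearMap,
    LinearMap.det_toLin, Matrix.det_fin_two_of]
  linear_combination p.1 * sin_sq_add_cos_sq p.2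

theorem injOn_coneMap {m : ℝ × ℝ} (hm : m.1 ^ 2 + m.2 ^ 2 < 1) {a b : ℝ} (hba : b - a ≤ 2 * π) :
    InjOn (coneMap m) (Ioo 0 1 ×ˢ Ioo a b) := by
  rintro ⟨s, θ⟩ ⟨hs, hθ⟩ ⟨s', θ'⟩ ⟨hs', hθ'⟩ h
  have hs'0 : s' ≠ 0 := hs'.1.ne'
  have hray : m + (s / s') • (((cos θ, sin θ) : ℝ × ℝ) - m) = (cos θ', sin θ') := by
    have h' : s • (((cos θ, sin θ) : ℝ × ℝ) - m) = s' • ((cos θ', sin θ') - m) :=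
      add_left_cancel h
    rw [div_eq_inv_mul, mul_smul, h', smul_smul, inv_mul_cancel₀ hs'0, one_smul,
      add_sub_cancel]
  have hss : s / s' = 1 := by
    refine eq_one_of_add_smul_sub_mem_unitCircle (p := (cos θ, sin θ)) hm (cos_sq_add_sin_sq θ)
      (div_pos hs.1 hs'.1).le ?_
    rw [hray]
    exact cos_sq_add_sin_sq θ'
  rw [hss, one_smul, add_sub_cancel] at hray
  rw [(div_eq_one_iff_eq hs'0).1 hss, show θ = θ' from injOn_cos_sin_Ioo hba hθ hθ' hray]

theorem coneMap_eq_lineMap (m p : ℝ × ℝ) :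
    coneMap m p = AffineMap.lineMap m (cos p.2, sin p.2) p.1 := by
  rw [AffineMap.lineMap_apply, vsub_eq_sub, vadd_eq_add, add_comm]
  rfl

theorem shadowSet_eq_image_coneMap {m : ℝ × ℝ} (hm : m.1 ^ 2 + m.2 ^ 2 < 1) (a b : ℝ) :
    {u : ℝ × ℝ | u.1 ^ 2 + u.2 ^ 2 ≤ 1 ∧
      ∃ t ≥ (1 : ℝ), ∃ θ ∈ Icc a b, m + t • (u - m) = (cos θ, sin θ)}
      = coneMap m '' (Ioc 0 1 ×ˢ Icc a b) := by
  ext u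
  constructor
  · rintro ⟨-, t, ht, θ, hθ, hshadow⟩
    have ht0 : t ≠ 0 := by positivity
    refine ⟨(t⁻¹, θ), ⟨⟨by positivity, inv_le_one_of_one_le₀ ht⟩, hθ⟩, ?_⟩
    rw [coneMap, ← hshadow, add_sub_cancel_left, smul_smul, inv_mul_cancel₀ ht0, one_smul,
      add_sub_cancel]
  · rintro ⟨⟨s, θ⟩, ⟨hs, hθ⟩, rfl⟩
    refine ⟨?_, s⁻¹, one_le_inv₀ hs.1 |>.2 hs.2, θ, hθ, ?_⟩
    · rw [coneMap_eq_lineMap]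
      refine convex_unitDisk.lineMap_mem (le_of_lt hm) ?_ ⟨hs.1.le, hs.2⟩
      exact (cos_sq_add_sin_sq θ).le
    · rw [coneMap, add_sub_cancel_left, smul_smul, inv_mul_cancel₀ hs.1.ne', one_smul,
        add_sub_cancel]

theorem measure_image_eq_of_measure_diff_eq_zero {E : Type*} [NormedAddCommGroup E]
    [NormedSpace ℝ E] [FiniteDimensional ℝ E] [MeasurableSpace E] [BorelSpace E]
    (μ : Measure E) [μ.IsAddHaarMeasure] {f : E → E} {s t : Set E}
    (hf : DifferentiableOn ℝ f s) (hts : t ⊆ s) (hst : μ (s \ t) = 0) :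
    μ (f '' s) = μ (f '' t) := by
  refine le_antisymm ?_ (measure_mono (image_mono hts))
  calc μ (f '' s) = μ (f '' t ∪ f '' (s \ t)) := by
        rw [← image_union, union_sdiff_cancel hts]
    _ ≤ μ (f '' t) + μ (f '' (s \ t)) := measure_union_le _ _
    _ = μ (f '' t) := by
        rw [addHaar_image_eq_zero_of_differentiableOn_of_addHaar_eq_zero μ
          (hf.mono sdiff_subset) hst, add_zero]

theorem volume_Ioc_prod_Icc_diff_Ioo_prod_Ioo (a b c d : ℝ) :
    volume (Ioc a b ×ˢ Icc c d \ Ioo a b ×ˢ Ioo c d) = 0 := by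
  have hsub : Ioo a b ×ˢ Ioo c d ⊆ Ioc a b ×ˢ Icc c d :=
    prod_mono Ioo_subset_Ioc_self Ioo_subset_Icc_self
  have hfin : volume (Ioo a b ×ˢ Ioo c d) ≠ ⊤ :=
    (Metric.isBounded_Ioo a b).prod (Metric.isBounded_Ioo c d) |>.measure_lt_top.ne
  rw [measure_sdiff hsub (measurableSet_Ioo.prod measurableSet_Ioo).nullMeasurableSet hfin,
    Measure.volume_eq_prod, Measure.prod_prod, Measure.prod_prod, Real.volume_Ioc,
    Real.volume_Icc, Real.volume_Ioo, Real.volume_Ioo, tsub_self]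

theorem integral_one_sub_mul_cos_sub_mul_sin (m : ℝ × ℝ) (a b : ℝ) :
    ∫ θ in a..b, (1 - m.1 * cos θ - m.2 * sin θ)
      = (b - a) - m.1 * (sin b - sin a) - m.2 * (cos a - cos b) := by
  have hcos : IntervalIntegrable (fun θ => m.1 * cos θ) volume a b :=
    (continuous_const.mul continuous_cos).intervalIntegrable a b
  have hsin : IntervalIntegrable (fun θ => m.2 * sin θ) volume a b :=
    (continuous_const.mul continuous_sin).intervalIntegrable a b
  rw [intervalIntegral.integral_sub (intervalIntegrable_const.sub hcos) hsin,
    intervalIntegral.integral_sub intervalIntegrable_const hcos,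
    intervalIntegral.integral_const_mul, intervalIntegral.integral_const_mul, integral_cos,
    integral_sin, intervalIntegral.integral_const, smul_eq_mul, mul_one]

theorem measureReal_image_coneMap {m : ℝ × ℝ} (hm : m.1 ^ 2 + m.2 ^ 2 < 1) {a b : ℝ}
    (hab : a ≤ b) (hba : b - a ≤ 2 * π) :
    volume.real (coneMap m '' (Ioo 0 1 ×ˢ Ioo a b))
      = ((b - a) - m.1 * (sin b - sin a) - m.2 * (cos a - cos b)) / 2 := by
  have hmeas : MeasurableSet (Ioo (0 : ℝ) 1 ×ˢ Ioo a b) :=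
    measurableSet_Ioo.prod measurableSet_Ioo
  have habs_det : ∀ p ∈ Ioo (0 : ℝ) 1 ×ˢ Ioo a b,
      |(coneMapDeriv m p).det| • (1 : ℝ) = p.1 * (1 - m.1 * cos p.2 - m.2 * sin p.2) := by
    rintro p ⟨hs, -⟩
    rw [smul_eq_mul, mul_one, det_coneMapDeriv,
      abs_of_pos (mul_pos hs.1 (one_sub_mul_cos_sub_mul_sin_pos hm p.2))]
  calc volume.real (coneMap m '' (Ioo 0 1 ×ˢ Ioo a b))
      = ∫ _ in coneMap m '' (Ioo 0 1 ×ˢ Ioo a b), (1 : ℝ) := by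
        rw [setIntegral_const, smul_eq_mul, mul_one]
    _ = ∫ p in Ioo (0 : ℝ) 1 ×ˢ Ioo a b, p.1 * (1 - m.1 * cos p.2 - m.2 * sin p.2) := by
        rw [integral_image_eq_integral_abs_det_fderiv_smul volume hmeas
          (fun p _ => (hasFDerivAt_coneMap m p).hasFDerivWithinAt) (injOn_coneMap hm hba)]
        exact setIntegral_congr_fun hmeas habs_det
    _ = (∫ s in Ioo (0 : ℝ) 1, s) * ∫ θ in Ioo a b, (1 - m.1 * cos θ - m.2 * sin θ) := by
        rw [Measure.volume_eq_prod, ← Measure.prod_restrict]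
        exact integral_prod_mul (fun s => s) (fun θ => 1 - m.1 * cos θ - m.2 * sin θ)
    _ = ((b - a) - m.1 * (sin b - sin a) - m.2 * (cos a - cos b)) / 2 := by
        rw [← integral_Ioc_eq_integral_Ioo, ← integral_Ioc_eq_integral_Ioo,
          ← intervalIntegral.integral_of_le zero_le_one, ← intervalIntegral.integral_of_le hab,
          integral_id, integral_one_sub_mul_cos_sub_mul_sin]
        ring

theorem shadowMeasure_eq {m : ℝ × ℝ} (hm : m.1 ^ 2 + m.2 ^ 2 < 1) {a b : ℝ} (hab : a ≤ b)
    (hba : b - a ≤ 2 * π) :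
    shadowMeasure a b m = ((b - a) - m.1 * (sin b - sin a) - m.2 * (cos a - cos b)) / 2 := by
  have hdiff : DifferentiableOn ℝ (coneMap m) (Ioc 0 1 ×ˢ Icc a b) :=
    fun p _ => (hasFDerivAt_coneMap m p).differentiableAt.differentiableWithinAt
  rw [shadowMeasure, shadowSet_eq_image_coneMap hm,
    measure_image_eq_of_measure_diff_eq_zero volume hdiff
      (prod_mono Ioo_subset_Ioc_self Ioo_subset_Icc_self)
      (volume_Ioc_prod_Icc_diff_Ioo_prod_Ioo 0 1 a b),
    ← measureReal_def, measureReal_image_coneMap hm hab hba]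

/-- The map `μ ↦ shadowMeasure a b μ` is affine on the open unit disk. -/
theorem shadowMeasure_affine (a b : ℝ) (hab : a ≤ b) (hba : b - a ≤ 2 * π)
    (μ ν : ℝ × ℝ) (hμ : μ.1 ^ 2 + μ.2 ^ 2 < 1) (hν : ν.1 ^ 2 + ν.2 ^ 2 < 1)
    (c : ℝ) (hc0 : 0 ≤ c) (hc1 : c ≤ 1) :
    shadowMeasure a b (c • μ + (1 - c) • ν)
      = c * shadowMeasure a b μ + (1 - c) * shadowMeasure a b ν := by
  have hmem : c • μ + (1 - c) • ν ∈ {u : ℝ × ℝ | u.1 ^ 2 + u.2 ^ 2 < 1} :=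
    convex_openUnitDisk hμ hν hc0 (sub_nonneg.2 hc1) (add_sub_cancel c 1)
  rw [shadowMeasure_eq hmem hab hba, shadowMeasure_eq hμ hab hba, shadowMeasure_eq hν hab hba]
  simp only [Prod.fst_add, Prod.snd_add, Prod.smul_fst, Prod.smul_snd, smul_eq_mul]
  ring
end

section
/- Suppose c ∈ ℝ is such that for every 0 ≤ ρ < 1 and every φ ∈ ℝ, ∫₀^{2π} c • (cos θ, sin θ) · (1 − ρ cos(θ − φ))/(2π) dθ = (ρ cos φ, ρ sin φ). Then c = −2. Moreover, for every θ, the point −2 • (cos θ, sin θ) has Euclidean norm 2, hence lies outside the closed unit disk. -/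
open Real

/-- If `c X` is an unbiased estimator of `μ`, then `c = -2`; moreover `-2 • (cos θ, sin θ)`
always has Euclidean norm `2`, hence lies outside the closed unit disk. -/
theorem unbiased_estimator_is_absurd (c : ℝ)
    (h : ∀ ρ φ : ℝ, 0 ≤ ρ → ρ < 1 →
      (∫ θ in (0 : ℝ)..(2 * π),
          ((1 - ρ * Real.cos (θ - φ)) / (2 * π)) • (c • ((Real.cos θ, Real.sin θ) : ℝ × ℝ)))
        = ((ρ * Real.cos φ, ρ * Real.sin φ) : ℝ × ℝ)) :
    c = -2 ∧ ∀ θ : ℝ,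
      Real.sqrt ((-2 * Real.cos θ) ^ 2 + (-2 * Real.sin θ) ^ 2) = 2 ∧
      ¬ ((-2 * Real.cos θ) ^ 2 + (-2 * Real.sin θ) ^ 2 ≤ 1) := by
  constructor
  · have h1 := h (1/2) 0 (by norm_num) (by norm_num)
    have hint : IntervalIntegrable
        (fun θ : ℝ => ((1 - (1/2 : ℝ) * Real.cos (θ - 0)) / (2 * π)) •
          (c • ((Real.cos θ, Real.sin θ) : ℝ × ℝ)))
        MeasureTheory.volume 0 (2 * π) := by
      apply Continuous.intervalIntegrable
      fun_prop
    have h2 : (∫ θ in (0:ℝ)..(2*π),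
        ((1 - (1/2:ℝ) * Real.cos (θ - 0)) / (2 * π)) * (c * Real.cos θ)) = 1/2 := by
      have h4 := (ContinuousLinearMap.fst ℝ ℝ ℝ).intervalIntegral_comp_comm hint
      simp only [ContinuousLinearMap.coe_fst', Prod.smul_fst, smul_eq_mul] at h4
      rw [h4, h1]
      simp
    have h3 : (∫ θ in (0:ℝ)..(2*π),
        ((1 - (1/2:ℝ) * Real.cos (θ - 0)) / (2 * π)) * (c * Real.cos θ)) = -c/4 := by
      have : ∀ θ : ℝ, ((1 - (1/2:ℝ) * Real.cos (θ - 0)) / (2 * π)) * (c * Real.cos θ)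
          = (c/(2*π)) * Real.cos θ - (c/(4*π)) * Real.cos θ ^ 2 := by
        intro θ
        have hπ : (π : ℝ) ≠ 0 := Real.pi_ne_zero
        field_simp
        ring
      rw [intervalIntegral.integral_congr (fun θ _ => this θ),
        intervalIntegral.integral_sub, intervalIntegral.integral_const_mul,
        intervalIntegral.integral_const_mul, integral_cos, integral_cos_sq]
      · have hπ : (π : ℝ) ≠ 0 := Real.pi_ne_zero
        simp [Real.sin_two_pi, Real.cos_two_pi]
        field_simp
      · exact (continuous_const.mul Real.continuous_cos).intervalIntegrable _ _
      · exact (continuous_const.mul (Real.continuous_cos.pow 2)).intervalIntegrable _ _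
    rw [h3] at h2
    simp at h2
    linarith
  · intro θ
    have hs : (-2 * Real.cos θ) ^ 2 + (-2 * Real.sin θ) ^ 2 = 4 := by
      have := Real.sin_sq_add_cos_sq θ
      nlinarith
    rw [hs]
    constructor
    · rw [show (4:ℝ) = 2^2 by norm_num, Real.sqrt_sq (by norm_num)]
    · norm_num
end

section
/- For every θ ∈ ℝ, the vector-valued double integral ∫₀^{2π} ∫₀^1 ρ • (cos φ, sin φ) · ((1 − ρ cos(θ − φ))/π) · ρ dρ dφ equals −(cos θ, sin θ)/4. (That is, under the uniform prior on the disk, the posterior expected location of the light source given shadow angle θ is E(μ | Θ = θ) = −X/4, where X = (cos θ, sin θ).) -/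
/-!
Integrating out `ρ` first leaves the angular weight `(1/3 - cos (θ - φ) / 4) / π`. Over a full
period the unit vector `(cos φ, sin φ)` averages to zero, while `cos (θ - φ)` is its projection
onto `(cos θ, sin θ)`, whose integral against it is `π • (cos θ, sin θ)`; only that term survives.
-/

open Real MeasureTheory

theorem intervalIntegral_pair {E F : Type*} [NormedAddCommGroup E] [NormedSpace ℝ E]
    [CompleteSpace E] [NormedAddCommGroup F] [NormedSpace ℝ F] [CompleteSpace F]
    {f : ℝ → E} {g : ℝ → F} {a b : ℝ} {μ : Measure ℝ}
    (hf : IntervalIntegrable f μ a b) (hg : IntervalIntegrable g μ a b) :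
    ∫ x in a..b, (f x, g x) ∂μ = (∫ x in a..b, f x ∂μ, ∫ x in a..b, g x ∂μ) := by
  simp only [intervalIntegral, integral_pair hf.1 hg.1, integral_pair hf.2 hg.2, Prod.mk_sub_mk]

theorem integral_sq_mul_one_sub_mul (c : ℝ) :
    ∫ ρ in (0 : ℝ)..1, ρ ^ 2 * (1 - ρ * c) = 1 / 3 - c / 4 := by
  have h : (fun ρ : ℝ => ρ ^ 2 * (1 - ρ * c)) = fun ρ => ρ ^ 2 - c * ρ ^ 3 := by
    ext ρ; ring
  rw [h, intervalIntegral.integral_sub (Continuous.intervalIntegrable (by fun_prop) _ _)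
    (Continuous.intervalIntegrable (by fun_prop) _ _), intervalIntegral.integral_const_mul,
    integral_pow, integral_pow]
  ring

theorem integral_cos_sin_add_two_pi (a : ℝ) :
    ∫ φ in a..a + 2 * π, ((cos φ, sin φ) : ℝ × ℝ) = 0 := by
  rw [intervalIntegral_pair (Continuous.intervalIntegrable (by fun_prop) _ _)
    (Continuous.intervalIntegrable (by fun_prop) _ _), integral_cos, integral_sin]
  simp

theorem integral_cos_sub_smul_cos_sin_add_two_pi (θ a : ℝ) :
    ∫ φ in a..a + 2 * π, cos (θ - φ) • ((cos φ, sin φ) : ℝ × ℝ)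
      = π • ((cos θ, sin θ) : ℝ × ℝ) := by
  have hfst : (fun φ => cos (θ - φ) * cos φ)
      = fun φ => cos θ * cos φ ^ 2 + sin θ * (sin φ * cos φ) := by
    ext φ; rw [cos_sub]; ring
  have hsnd : (fun φ => cos (θ - φ) * sin φ)
      = fun φ => sin θ * sin φ ^ 2 + cos θ * (sin φ * cos φ) := by
    ext φ; rw [cos_sub]; ring
  simp only [Prod.smul_mk, smul_eq_mul]
  rw [intervalIntegral_pair (Continuous.intervalIntegrable (by fun_prop) _ _)
    (Continuous.intervalIntegrable (by fun_prop) _ _), hfst, hsnd,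
    intervalIntegral.integral_add (Continuous.intervalIntegrable (by fun_prop) _ _)
      (Continuous.intervalIntegrable (by fun_prop) _ _),
    intervalIntegral.integral_add (Continuous.intervalIntegrable (by fun_prop) _ _)
      (Continuous.intervalIntegrable (by fun_prop) _ _)]
  simp only [intervalIntegral.integral_const_mul, integral_cos_sq, integral_sin_sq,
    integral_sin_mul_cos₁, sin_add_two_pi, cos_add_two_pi]
  ext <;> simp <;> ring

/-- Under the uniform prior on the disk, the posterior expected location of the
light source given shadow angle `θ` is `-X/4`, where `X = (cos θ, sin θ)`. -/
theorem posterior_mean (θ : ℝ) :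
    (∫ φ in (0 : ℝ)..(2 * π), ∫ ρ in (0 : ℝ)..1,
        (ρ * ((1 - ρ * Real.cos (θ - φ)) / π) * ρ) • ((Real.cos φ, Real.sin φ) : ℝ × ℝ))
      = -((4 : ℝ)⁻¹) • ((Real.cos θ, Real.sin θ) : ℝ × ℝ) := by
  have radial (φ : ℝ) : ∫ ρ in (0 : ℝ)..1, ρ * ((1 - ρ * cos (θ - φ)) / π) * ρ
      = (1 / 3 - cos (θ - φ) / 4) / π := by
    rw [← integral_sq_mul_one_sub_mul, ← intervalIntegral.integral_div]
    congr 1; ext ρ; ring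
  have split (φ : ℝ) : ((1 / 3 - cos (θ - φ) / 4) / π) • ((cos φ, sin φ) : ℝ × ℝ)
      = (3 * π)⁻¹ • ((cos φ, sin φ) : ℝ × ℝ) - (4 * π)⁻¹ • cos (θ - φ) • (cos φ, sin φ) := by
    rw [smul_smul, ← sub_smul]
    congr 1; field_simp
  simp only [intervalIntegral.integral_smul_const, radial, split]
  rw [intervalIntegral.integral_sub (Continuous.intervalIntegrable (by fun_prop) _ _)
      (Continuous.intervalIntegrable (by fun_prop) _ _),
    intervalIntegral.integral_smul, intervalIntegral.integral_smul,
    ← zero_add (2 * π), integral_cos_sin_add_two_pi, integral_cos_sub_smul_cos_sin_add_two_pi,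
    smul_smul]
  field_simp
  simp
end
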